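/- arXiv:1301.3681 — 2 statements merged into one kernel-verified Lean document; each statement's English description precedes it below -/
import Mathlib

section
/- Let π : G → H be a continuous homomorphism of topological groups with H locally compact Hausdorff, let a ∈ G, and let K be a compact subgroup of G such that a K a^{−1} = K and K is contained in the closure of con(a) in G. If the contraction group con(π(a)) is closed in H, then K ⊆ ker π. -/
/-!
The image `Q = π(K)` is a compact subgroup of `H` normalized by `b = π(a)`, and since `con b` is
closed it contains `π(closure (con a)) ⊆ closure (con b)`, so `Q ⊆ con b`. Conjugation by `bⁿ`
preserves the Haar measure of `Q`. If `x ≠ 1` lay in `Q`, separate it from `1` by disjoint open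
sets `V ∋ x`, `U ∋ 1`: every point of `Q` is eventually conjugated into `U`, hence out of `V`,
and dominated convergence forces `μ(V ∩ Q) = 0`, contradicting that Haar measure charges open
sets.
-/

open Filter Topology

open MeasureTheory

theorem MeasureTheory.measure_eq_zero_of_eventually_notMem_of_measurePreserving
    {X ι : Type*} [MeasurableSpace X] {μ : Measure X} [IsFiniteMeasure μ]
    {L : Filter ι} [L.NeBot] [L.IsCountablyGenerated] {f : ι → X → X}
    (hf : ∀ i, MeasurePreserving (f i) μ μ) {s : Set X} (hs : MeasurableSet s)
    (hleave : ∀ x, ∀ᶠ i in L, f i x ∉ s) : μ s = 0 := by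
  have hlim : Tendsto (fun i => μ (f i ⁻¹' s)) L (𝓝 (μ ∅)) :=
    tendsto_measure_of_tendsto_indicator_of_isFiniteMeasure L μ
      (fun i => (hf i).measurable hs) fun x => (hleave x).mono fun i hi => by simpa using hi
  simp_rw [(hf _).measure_preimage hs.nullMeasurableSet, measure_empty] at hlim
  exact tendsto_const_nhds_iff.mp hlim

theorem Subgroup.mem_normalizer_of_image_conj_eq {G : Type*} [Group G] {Q : Subgroup G} {b : G}
    (hconj : (fun g => b * g * b⁻¹) '' (Q : Set G) = Q) :
    b ∈ Subgroup.normalizer (Q : Set G) := by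
  refine Subgroup.mem_normalizer_iff.mpr fun h => ?_
  have hinj : Function.Injective (fun g => b * g * b⁻¹) := (MulAut.conj b).injective
  rw [← SetLike.mem_coe, ← SetLike.mem_coe, ← hinj.mem_set_image, hconj]

namespace KacMoodyPaper

def con {G : Type*} [Group G] [TopologicalSpace G] (a : G) : Set G :=
  {g | Filter.Tendsto (fun k : ℕ => a ^ k * g * (a ^ k)⁻¹) Filter.atTop (nhds 1)}

theorem map_mem_con {G H : Type*} [Group G] [TopologicalSpace G] [Group H] [TopologicalSpace H]
    {π : G →* H} (hπ : Continuous π) {a g : G} (hg : g ∈ con a) : π g ∈ con (π a) := by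
  simpa [Function.comp_def, con] using (hπ.tendsto 1).comp hg

theorem eq_bot_of_isCompact_of_subset_con {H : Type*} [Group H] [TopologicalSpace H]
    [IsTopologicalGroup H] [T2Space H] {Q : Subgroup H} (hQc : IsCompact (Q : Set H)) {b : H}
    (hb : b ∈ Subgroup.normalizer (Q : Set H)) (hcon : (Q : Set H) ⊆ con b) : Q = ⊥ := by
  refine (Subgroup.eq_bot_iff_forall Q).mpr fun x hx => ?_
  by_contra hx1
  obtain ⟨U, V, hU, hV, h1U, hxV, hUV⟩ := t2_separation (Ne.symm hx1)
  have : CompactSpace Q := isCompact_iff_compactSpace.mp hQc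
  let _ : MeasurableSpace Q := borel Q
  have : BorelSpace Q := ⟨rfl⟩
  let ψ : ℕ → Q ≃* Q := fun n => Q.normalizerMonoidHom (⟨b, hb⟩ ^ n)
  have hψ : ∀ n (z : Q), (ψ n z : H) = b ^ n * z * (b ^ n)⁻¹ := fun n z =>
    Q.normalizerMonoidHom_apply_apply_coe _ z
  have hψcont : ∀ n, Continuous (ψ n) := fun n =>
    continuous_induced_rng.2 (by simp_rw [Function.comp_def, hψ]; fun_prop)
  have hψmp : ∀ n, MeasurePreserving (ψ n) Measure.haar Measure.haar := fun n =>
    (ψ n).toMonoidHom.measurePreserving (hψcont n) (ψ n).surjective rfl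
  have hV' : IsOpen (Subtype.val ⁻¹' V : Set Q) := hV.preimage continuous_subtype_val
  have hleave : ∀ z : Q, ∀ᶠ n in atTop, ψ n z ∉ Subtype.val ⁻¹' V := fun z =>
    ((hcon z.2).eventually (hU.mem_nhds h1U)).mono fun n hn hnV =>
      hUV.le_bot ⟨by rwa [← hψ] at hn, hnV⟩
  exact (hV'.measure_pos Measure.haar ⟨⟨x, hx⟩, hxV⟩).ne'
    (measure_eq_zero_of_eventually_notMem_of_measurePreserving hψmp hV'.measurableSet hleave)

theorem compact_invariant_subgroup_in_ker_general {G H : Type*} [Group G] [TopologicalSpace G]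
    [Group H] [TopologicalSpace H] [IsTopologicalGroup H] [T2Space H]
    (π : G →* H) (hπ : Continuous π) (a : G) (K : Subgroup G)
    (hKc : IsCompact (K : Set G))
    (hconj : (fun g => a * g * a⁻¹) '' (K : Set G) = (K : Set G))
    (hsub : (K : Set G) ⊆ closure (con a))
    (hclosed : IsClosed (con (π a))) :
    ∀ g ∈ K, π g = 1 := by
  have hb : π a ∈ Subgroup.normalizer (K.map π : Set H) :=
    K.le_normalizer_map π ⟨a, Subgroup.mem_normalizer_of_image_conj_eq hconj, rfl⟩
  have hcon : (K.map π : Set H) ⊆ con (π a) := calc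
    π '' K ⊆ π '' closure (con a) := Set.image_mono hsub
    _ ⊆ closure (π '' con a) := image_closure_subset_closure_image hπ
    _ ⊆ closure (con (π a)) := closure_mono (Set.image_subset_iff.mpr fun _ => map_mem_con hπ)
    _ = con (π a) := hclosed.closure_eq
  have hker := eq_bot_of_isCompact_of_subset_con (hKc.image hπ) hb hcon
  intro g hg
  simpa [hker] using Subgroup.mem_map_of_mem π hg

/-- if `π : G → H` is a continuous homomorphism with `H` locally compact
Hausdorff, `K` is a compact subgroup of `G` with `a K a⁻¹ = K` and `K ⊆ closure (con a)`,
and `con (π a)` is closed in `H`, then `K ⊆ ker π`. -/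
theorem compact_invariant_subgroup_in_ker {G H : Type*} [Group G] [TopologicalSpace G]
    [IsTopologicalGroup G] [Group H] [TopologicalSpace H] [IsTopologicalGroup H]
    [LocallyCompactSpace H] [T2Space H]
    (π : G →* H) (hπ : Continuous π) (a : G) (K : Subgroup G)
    (hKc : IsCompact (K : Set G))
    (hconj : (fun g => a * g * a⁻¹) '' (K : Set G) = (K : Set G))
    (hsub : (K : Set G) ⊆ closure (con a))
    (hclosed : IsClosed (con (π a))) :
    ∀ g ∈ K, π g = 1 :=
  compact_invariant_subgroup_in_ker_general π hπ a K hKc hconj hsub hclosed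

end KacMoodyPaper
end

section
/- Let G be a locally compact Hausdorff topological group, let a ∈ G, and let K be a nontrivial compact subgroup of G such that a K a^{−1} = K and K is contained in the closure of con(a) in G. Then con(a) is not closed in G. -/
/-! If `con a` were closed it would contain `K`, so conjugation by `a` would be a continuous
surjective endomorphism of the compact group `K` whose iterates converge pointwise to `1`. Such an
endomorphism preserves the Haar probability measure of `K`, and pointwise convergence of the
iterates then forces every neighbourhood of `1` to have full measure. As Haar measure charges
every nonempty open set and `K` is Hausdorff, `K` is trivial. -/

open Filter Topology MeasureTheory

theorem MeasureTheory.MeasurePreserving.measure_compl_eq_zero_of_tendsto_iterate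
    {X : Type*} [TopologicalSpace X] [MeasurableSpace X] {μ : Measure X} [IsFiniteMeasure μ]
    {T : X → X} (hT : MeasurePreserving T μ μ) {x₀ : X}
    (hconv : ∀ x, Tendsto (fun n => T^[n] x) atTop (𝓝 x₀))
    {U : Set X} (hU : U ∈ 𝓝 x₀) (hUm : MeasurableSet U) : μ Uᶜ = 0 := by
  set A : ℕ → Set X := fun n => ⋂ m ≥ n, T^[m] ⁻¹' U
  have hA_mono : Monotone A := fun n n' hnn' x hx =>
    Set.mem_iInter₂.mpr fun m hm => Set.mem_iInter₂.mp hx m (hnn'.trans hm)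
  have hA_union : ⋃ n, A n = Set.univ := Set.eq_univ_of_forall fun x => by
    obtain ⟨N, hN⟩ := eventually_atTop.mp ((hconv x).eventually hU)
    exact Set.mem_iUnion.mpr ⟨N, Set.mem_iInter₂.mpr hN⟩
  have hA_le : ∀ n, μ (A n) ≤ μ U := fun n =>
    calc μ (A n) ≤ μ (T^[n] ⁻¹' U) := measure_mono (Set.iInter₂_subset n le_rfl)
      _ = μ U := (hT.iterate n).measure_preimage hUm.nullMeasurableSet
  have hU_univ : μ Set.univ ≤ μ U := by
    rw [← hA_union]
    exact le_of_tendsto (tendsto_measure_iUnion_atTop hA_mono) (Eventually.of_forall hA_le)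
  rw [measure_compl hUm (measure_ne_top μ U)]
  exact tsub_eq_zero_of_le hU_univ

theorem MeasureTheory.MeasurePreserving.subsingleton_of_tendsto_iterate
    {X : Type*} [TopologicalSpace X] [T2Space X] [MeasurableSpace X] [OpensMeasurableSpace X]
    {μ : Measure X} [IsFiniteMeasure μ] [μ.IsOpenPosMeasure]
    {T : X → X} (hT : MeasurePreserving T μ μ) {x₀ : X}
    (hconv : ∀ x, Tendsto (fun n => T^[n] x) atTop (𝓝 x₀)) : Subsingleton X := by
  refine ⟨fun x y => ?_⟩
  suffices ∀ x, x = x₀ by rw [this x, this y]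
  intro x
  by_contra hx
  obtain ⟨W, U, hWo, hUo, hxW, hx₀U, hWU⟩ := t2_separation hx
  have hW_null : μ W = 0 := measure_mono_null (hWU.subset_compl_right)
    (hT.measure_compl_eq_zero_of_tendsto_iterate hconv (hUo.mem_nhds hx₀U) hUo.measurableSet)
  exact (hWo.measure_pos μ ⟨x, hxW⟩).ne' hW_null

theorem subsingleton_of_tendsto_iterate_monoidHom {K : Type*} [Group K] [TopologicalSpace K]
    [IsTopologicalGroup K] [CompactSpace K] [T2Space K] {φ : K →* K} (hφc : Continuous φ)
    (hφs : Function.Surjective φ) (hconv : ∀ k, Tendsto (fun n => φ^[n] k) atTop (𝓝 1)) :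
    Subsingleton K := by
  borelize K
  have hφμ : MeasurePreserving φ Measure.haar Measure.haar :=
    MonoidHom.measurePreserving hφc hφs rfl
  exact hφμ.subsingleton_of_tendsto_iterate hconv

namespace KacMoodyPaper

section ConjRestrict

variable {G : Type*} [Group G] {a : G} {K : Subgroup G}

def conjRestrict (hconj : (fun g => a * g * a⁻¹) '' (K : Set G) = (K : Set G)) : K →* K where
  toFun k := ⟨a * k * a⁻¹, show _ ∈ (K : Set G) from hconj ▸ Set.mem_image_of_mem _ k.2⟩
  map_one' := by ext; simp
  map_mul' k l := by ext; simp only [Subgroup.coe_mul]; group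

variable (hconj : (fun g => a * g * a⁻¹) '' (K : Set G) = (K : Set G))

theorem coe_conjRestrict_iterate (n : ℕ) (k : K) :
    ((conjRestrict hconj)^[n] k : G) = a ^ n * k * (a ^ n)⁻¹ := by
  induction n with
  | zero => simp
  | succ n ih =>
    rw [Function.iterate_succ_apply', pow_succ']
    change a * ((conjRestrict hconj)^[n] k : G) * a⁻¹ = _
    rw [ih]
    group

theorem conjRestrict_surjective : Function.Surjective (conjRestrict hconj) := by
  rintro ⟨g, hg⟩
  rw [← SetLike.mem_coe, ← hconj] at hg
  obtain ⟨h, hK, rfl⟩ := hg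
  exact ⟨⟨h, hK⟩, rfl⟩

theorem continuous_conjRestrict [TopologicalSpace G] [IsTopologicalGroup G] :
    Continuous (conjRestrict hconj) :=
  ((continuous_const.mul continuous_subtype_val).mul continuous_const).subtype_mk _

theorem tendsto_conjRestrict_iterate [TopologicalSpace G] (hKcon : (K : Set G) ⊆ con a) (k : K) :
    Tendsto (fun n => (conjRestrict hconj)^[n] k) atTop (𝓝 1) := by
  rw [Topology.IsEmbedding.subtypeVal.tendsto_nhds_iff]
  simp only [Function.comp_def, coe_conjRestrict_iterate, OneMemClass.coe_one]
  exact hKcon k.2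

end ConjRestrict

theorem con_not_closed_of_nontrivial_compact_invariant_general {G : Type*} [Group G]
    [TopologicalSpace G] [IsTopologicalGroup G] [T2Space G]
    (a : G) (K : Subgroup G) (hKnt : K ≠ ⊥) (hKc : IsCompact (K : Set G))
    (hconj : (fun g => a * g * a⁻¹) '' (K : Set G) = (K : Set G))
    (hsub : (K : Set G) ⊆ closure (con a)) :
    ¬ IsClosed (con a) := by
  intro hcl
  have hKcon : (K : Set G) ⊆ con a := hcl.closure_eq ▸ hsub
  have : CompactSpace K := isCompact_iff_compactSpace.mp hKc
  have : Subsingleton K := subsingleton_of_tendsto_iterate_monoidHom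
    (continuous_conjRestrict hconj) (conjRestrict_surjective hconj)
    (tendsto_conjRestrict_iterate hconj hKcon)
  exact hKnt K.eq_bot_of_subsingleton

/-- in a locally compact Hausdorff topological group, if there is a
nontrivial compact subgroup `K` with `a K a⁻¹ = K` and `K ⊆ closure (con a)`, then
`con a` is not closed. -/
theorem con_not_closed_of_nontrivial_compact_invariant {G : Type*} [Group G]
    [TopologicalSpace G] [IsTopologicalGroup G] [LocallyCompactSpace G] [T2Space G]
    (a : G) (K : Subgroup G) (hKnt : K ≠ ⊥) (hKc : IsCompact (K : Set G))
    (hconj : (fun g => a * g * a⁻¹) '' (K : Set G) = (K : Set G))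
    (hsub : (K : Set G) ⊆ closure (con a)) :
    ¬ IsClosed (con a) :=
  con_not_closed_of_nontrivial_compact_invariant_general a K hKnt hKc hconj hsub

end KacMoodyPaper
end
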